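/- arXiv:1706.06833 — 2 statements merged into one kernel-verified Lean document; each statement's English description precedes it below -/
import Mathlib

section
/- Fix s with 0 < s < 2. Let A = [[a,0],[0,b]] be diagonal with 0 < a, b < 1 and a ≠ b, and let B = [[0,c],[d,0]] be anti-diagonal with 0 < c, d < 1. Define φ^s(M) = α₁(M)^s if s ≤ 1 and φ^s(M) = α₁(M)·α₂(M)^{s−1} if s > 1, where α₁(M) ≥ α₂(M) are the singular values of M. Then the ratio φ^s(Aⁿ·B·Aⁿ) / ( φ^s(Aⁿ·B) · φ^s(Aⁿ) ) tends to 0 as n → ∞. -/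
/-- The larger singular value of a 2×2 real matrix: its operator norm as a map
between Euclidean spaces. -/
noncomputable def alpha1 (M : Matrix (Fin 2) (Fin 2) ℝ) : ℝ :=
  ‖(Matrix.toEuclideanLin M).toContinuousLinearMap‖

/-- The smaller singular value of a 2×2 real matrix (the two singular values
multiply to |det M|). -/
noncomputable def alpha2 (M : Matrix (Fin 2) (Fin 2) ℝ) : ℝ :=
  |M.det| / alpha1 M

/-- Falconer's singular value function: φ^s(M) = α₁(M)^s for s ≤ 1 and
φ^s(M) = α₁(M)·α₂(M)^{s−1} for s > 1. -/
noncomputable def phi (s : ℝ) (M : Matrix (Fin 2) (Fin 2) ℝ) : ℝ :=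
  if s ≤ 1 then alpha1 M ^ s else alpha1 M * alpha2 M ^ (s - 1)

/-! For `1 < s` one has `φ^s(M) = α₁(M)^(2-s) · |det M|^(s-1)`, and since `|det|` is
multiplicative the determinant factors cancel in the ratio; for `s ≤ 1` there are none. So the
ratio is `rₙ^t` with `t = s` or `t = 2 - s`, both positive, where
`rₙ = α₁(AⁿBAⁿ) / (α₁(AⁿB) α₁(Aⁿ))`. The three matrices are diagonal or anti-diagonal, so `α₁` is
their largest absolute entry, and `rₙ ≤ (max(c,d)/min(c,d)) · (min(a,b)/max(a,b))ⁿ → 0`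
because `a ≠ b`. -/

open Filter Matrix

lemma norm_toEuclideanLin_single_le_alpha1 (M : Matrix (Fin 2) (Fin 2) ℝ) (i : Fin 2) :
    ‖toEuclideanLin M (EuclideanSpace.single i 1)‖ ≤ alpha1 M := by
  simpa [alpha1] using
    (toEuclideanLin M).toContinuousLinearMap.le_opNorm (EuclideanSpace.single i 1)

lemma alpha1_eq_max_abs {M : Matrix (Fin 2) (Fin 2) ℝ} {x y : ℝ}
    (h : ∀ v : EuclideanSpace ℝ (Fin 2),
      ‖toEuclideanLin M v‖ ^ 2 = (x * v 0) ^ 2 + (y * v 1) ^ 2) :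
    alpha1 M = max |x| |y| := by
  apply le_antisymm
  · refine (toEuclideanLin M).toContinuousLinearMap.opNorm_le_bound (by positivity) fun v => ?_
    have hv : ‖v‖ ^ 2 = v 0 ^ 2 + v 1 ^ 2 := by
      simp [EuclideanSpace.real_norm_sq_eq, Fin.sum_univ_two]
    have hx : x ^ 2 ≤ max |x| |y| ^ 2 := by
      simpa using pow_le_pow_left₀ (abs_nonneg x) (le_max_left |x| |y|) 2
    have hy : y ^ 2 ≤ max |x| |y| ^ 2 := by
      simpa using pow_le_pow_left₀ (abs_nonneg y) (le_max_right |x| |y|) 2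
    refine (pow_le_pow_iff_left₀ (norm_nonneg _) (by positivity) two_ne_zero).mp ?_
    rw [LinearMap.coe_toContinuousLinearMap', h]
    simp only [mul_pow, hv]
    nlinarith [sq_nonneg (v 0), sq_nonneg (v 1)]
  · have hsingle (i : Fin 2) (z : ℝ)
        (hz : ‖toEuclideanLin M (EuclideanSpace.single i 1)‖ ^ 2 = z ^ 2) : |z| ≤ alpha1 M := by
      rw [← sq_abs z, sq_eq_sq₀ (norm_nonneg _) (abs_nonneg z)] at hz
      exact hz ▸ norm_toEuclideanLin_single_le_alpha1 M i
    exact max_le (hsingle 0 x (by simpa using h (EuclideanSpace.single 0 1)))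
      (hsingle 1 y (by simpa using h (EuclideanSpace.single 1 1)))

lemma alpha1_diagonal (x y : ℝ) : alpha1 !![x, 0; 0, y] = max |x| |y| :=
  alpha1_eq_max_abs fun v => by
    simp [EuclideanSpace.real_norm_sq_eq, Fin.sum_univ_two, mulVec, dotProduct]

lemma alpha1_antidiagonal (x y : ℝ) : alpha1 !![0, x; y, 0] = max |x| |y| := by
  rw [max_comm]
  exact alpha1_eq_max_abs fun v => by
    simp [EuclideanSpace.real_norm_sq_eq, Fin.sum_univ_two, mulVec, dotProduct]
    ring

lemma alpha1_pos {M : Matrix (Fin 2) (Fin 2) ℝ} (hM : M.det ≠ 0) : 0 < alpha1 M := by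
  refine norm_pos_iff.mpr fun h => hM ?_
  have : toEuclideanLin M = 0 := by simpa using congrArg ContinuousLinearMap.toLinearMap h
  rw [map_eq_zero_iff _ (toEuclideanLin).injective] at this
  simp [this]

lemma phi_of_le_one {s : ℝ} (hs : s ≤ 1) (M : Matrix (Fin 2) (Fin 2) ℝ) :
    phi s M = alpha1 M ^ s :=
  if_pos hs

lemma phi_of_one_lt {s : ℝ} (hs : 1 < s) {M : Matrix (Fin 2) (Fin 2) ℝ} (hM : 0 < alpha1 M) :
    phi s M = alpha1 M ^ (2 - s) * |M.det| ^ (s - 1) := by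
  have h2s : alpha1 M ^ (2 - s) = alpha1 M / alpha1 M ^ (s - 1) := by
    rw [show 2 - s = 1 - (s - 1) by ring, Real.rpow_sub hM, Real.rpow_one]
  rw [phi, if_neg hs.not_ge, alpha2, Real.div_rpow (abs_nonneg _) hM.le, h2s]
  ring

lemma phi_mul_div_phi_mul {M N : Matrix (Fin 2) (Fin 2) ℝ} (hM : M.det ≠ 0) (hN : N.det ≠ 0)
    (s : ℝ) :
    phi s (M * N) / (phi s M * phi s N) =
      (alpha1 (M * N) / (alpha1 M * alpha1 N)) ^ (if s ≤ 1 then s else 2 - s) := by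
  have hα := alpha1_pos hM
  have hβ := alpha1_pos hN
  have hαβ := alpha1_pos (det_mul M N ▸ mul_ne_zero hM hN)
  split_ifs with hs
  · rw [phi_of_le_one hs, phi_of_le_one hs, phi_of_le_one hs,
      Real.div_rpow hαβ.le (by positivity), Real.mul_rpow hα.le hβ.le]
  · have hs' : 1 < s := not_le.mp hs
    rw [phi_of_one_lt hs' hαβ, phi_of_one_lt hs' hα, phi_of_one_lt hs' hβ, det_mul, abs_mul,
      Real.mul_rpow (abs_nonneg _) (abs_nonneg _), Real.div_rpow hαβ.le (by positivity),
      Real.mul_rpow hα.le hβ.le]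
    have : 0 < |M.det| ^ (s - 1) := by positivity
    have : 0 < |N.det| ^ (s - 1) := by positivity
    field_simp

lemma min_pow_div_max_pow {x y : ℝ} (hx : 0 ≤ x) (hy : 0 ≤ y) (n : ℕ) :
    min (x ^ n) (y ^ n) / max (x ^ n) (y ^ n) = (min x y / max x y) ^ n := by
  rcases le_total x y with h | h
  · simp [h, pow_le_pow_left₀ hx h, div_pow]
  · simp [h, pow_le_pow_left₀ hy h, div_pow]

lemma mul_max_div_le {u v c d : ℝ} (hu : 0 < u) (hv : 0 < v) (hc : 0 < c) (hd : 0 < d) :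
    u * v * max c d / (max (u * c) (v * d) * max u v) ≤
      max c d / min c d * (min u v / max u v) := by
  have hden : max u v * min c d ≤ max (u * c) (v * d) := by
    rw [max_mul_of_nonneg _ _ (by positivity)]
    exact max_le_max (by gcongr; exact min_le_left c d) (by gcongr; exact min_le_right c d)
  calc u * v * max c d / (max (u * c) (v * d) * max u v)
      ≤ u * v * max c d / (max u v * min c d * max u v) := by gcongr
    _ = max c d / min c d * (min u v / max u v) := by
      rw [← max_mul_min u v]
      field_simp

lemma pow_diagonal (x y : ℝ) (n : ℕ) : !![x, 0; 0, y] ^ n = !![x ^ n, 0; 0, y ^ n] := by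
  simpa [diagonal_fin_two] using diagonal_pow ![x, y] n

lemma tendsto_alpha1_ratio {a b c d : ℝ} (ha : 0 < a) (hb : 0 < b) (hab : a ≠ b) (hc : 0 < c)
    (hd : 0 < d) :
    Tendsto (fun n : ℕ => alpha1 (!![a, 0; 0, b] ^ n * !![0, c; d, 0] * !![a, 0; 0, b] ^ n) /
      (alpha1 (!![a, 0; 0, b] ^ n * !![0, c; d, 0]) * alpha1 (!![a, 0; 0, b] ^ n)))
      atTop (nhds 0) := by
  have hratio (n : ℕ) :
      alpha1 (!![a, 0; 0, b] ^ n * !![0, c; d, 0] * !![a, 0; 0, b] ^ n) /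
        (alpha1 (!![a, 0; 0, b] ^ n * !![0, c; d, 0]) * alpha1 (!![a, 0; 0, b] ^ n)) =
      a ^ n * b ^ n * max c d / (max (a ^ n * c) (b ^ n * d) * max (a ^ n) (b ^ n)) := by
    have han := pow_pos ha n
    have hbn := pow_pos hb n
    have hAB : !![a, 0; 0, b] ^ n * !![0, c; d, 0] = !![0, a ^ n * c; b ^ n * d, 0] := by
      simp [pow_diagonal]
    have hABA : !![a, 0; 0, b] ^ n * !![0, c; d, 0] * !![a, 0; 0, b] ^ n =
        !![0, a ^ n * b ^ n * c; a ^ n * b ^ n * d, 0] := by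
      rw [hAB, pow_diagonal, mul_fin_two]
      ring_nf
    rw [hABA, hAB, pow_diagonal, alpha1_antidiagonal, alpha1_antidiagonal, alpha1_diagonal,
      abs_of_pos (by positivity : 0 < a ^ n * b ^ n * c),
      abs_of_pos (by positivity : 0 < a ^ n * b ^ n * d),
      abs_of_pos (by positivity : 0 < a ^ n * c), abs_of_pos (by positivity : 0 < b ^ n * d),
      abs_of_pos han, abs_of_pos hbn, ← mul_max_of_nonneg _ _ (by positivity)]
  have hq : min a b / max a b < 1 :=
    (div_lt_one (lt_max_of_lt_left ha)).mpr (min_lt_max.mpr hab)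
  refine squeeze_zero (fun n => ?_) (fun n => ?_)
    (by simpa using
      (tendsto_pow_atTop_nhds_zero_of_lt_one (by positivity) hq).const_mul (max c d / min c d))
  · rw [hratio]; positivity
  · rw [hratio, ← min_pow_div_max_pow ha.le hb.le]
    exact mul_max_div_le (pow_pos ha n) (pow_pos hb n) hc hd

theorem stmt_3_general (s a b c d : ℝ) (hs0 : 0 < s) (hs2 : s < 2)
    (ha0 : 0 < a) (hb0 : 0 < b) (hab : a ≠ b)
    (hc0 : 0 < c) (hd0 : 0 < d)
    (A B : Matrix (Fin 2) (Fin 2) ℝ)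
    (hA : A = !![a, 0; 0, b]) (hB : B = !![0, c; d, 0]) :
    Tendsto (fun n : ℕ => phi s (A ^ n * B * A ^ n) / (phi s (A ^ n * B) * phi s (A ^ n)))
      atTop (nhds 0) := by
  have hdetA (n : ℕ) : (A ^ n).det ≠ 0 := by
    simp [hA, pow_diagonal, ha0.ne', hb0.ne']
  have hdetAB (n : ℕ) : (A ^ n * B).det ≠ 0 := by
    simp [hA, hB, pow_diagonal, ha0.ne', hb0.ne', hc0.ne', hd0.ne']
  have ht : 0 < if s ≤ 1 then s else 2 - s := by
    split_ifs <;> linarith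
  simp_rw [fun n => phi_mul_div_phi_mul (hdetAB n) (hdetA n) s]
  subst hA hB
  simpa [Real.zero_rpow ht.ne'] using
    (tendsto_alpha1_ratio ha0 hb0 hab hc0 hd0).rpow_const (Or.inr ht.le)

theorem stmt_3 (s a b c d : ℝ) (hs0 : 0 < s) (hs2 : s < 2)
    (ha0 : 0 < a) (ha1 : a < 1) (hb0 : 0 < b) (hb1 : b < 1) (hab : a ≠ b)
    (hc0 : 0 < c) (hc1 : c < 1) (hd0 : 0 < d) (hd1 : d < 1)
    (A B : Matrix (Fin 2) (Fin 2) ℝ)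
    (hA : A = !![a, 0; 0, b]) (hB : B = !![0, c; d, 0]) :
    Tendsto (fun n : ℕ => phi s (A ^ n * B * A ^ n) / (phi s (A ^ n * B) * phi s (A ^ n)))
      atTop (nhds 0) :=
  stmt_3_general s a b c d hs0 hs2 ha0 hb0 hab hc0 hd0 A B hA hB
end

section
/- With τ and ω defined as the two codings of the full shift Σ = {1,…,d}^ℕ into {1,…,2d}^ℕ (τ keeps the first symbol, ω adds d to it, and both toggle the +d shift according to the parity of the count of symbols ≥ l seen so far), the images τ(Σ) and ω(Σ) are disjoint, both maps are injective, and τ(Σ) ∪ ω(Σ) equals the subshift Σ_A determined by the transition matrix A of the paper. -/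
/-- The coding `τ`: the `m`-th symbol is shifted by `d` exactly when the number of
symbols `≥ L` among the first `m` symbols is odd. -/
def tau (d L : ℕ) (x : ℕ → ℕ) (m : ℕ) : ℕ :=
  if Even ((Finset.range m).filter (fun j => L ≤ x j)).card then x m else x m + d

/-- The coding `ω`: the `m`-th symbol is shifted by `d` exactly when the number of
symbols `≥ L` among the first `m` symbols is even. -/
def omega' (d L : ℕ) (x : ℕ → ℕ) (m : ℕ) : ℕ :=
  if Even ((Finset.range m).filter (fun j => L ≤ x j)).card then x m + d else x m

/-- The transition relation of the subshift of finite type (0-indexed version of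
the matrix `A` of the paper). -/
def transRel (d L i j : ℕ) : Prop :=
  if i < L ∨ d + L ≤ i then j < d else d ≤ j

/-!
A word over `{0, …, 2d-1}` is a pair of sequences: the symbols `y m % d` and the layers
`d ≤ y m`. Read this way, `A` says exactly that the layer flips after a symbol `≥ L` and
stays put after a symbol `< L`. The layers of `τ(x)` and `ω(x)` are the odd and the even
parity of the number of symbols `≥ L` seen so far, which both obey this rule and start in
layer `0` and `1` respectively. A layer sequence obeying the rule is determined by its
first term, so every word of `Σ_A` is `τ` or `ω` of its own symbol sequence.
-/

open Finset

def FlipsAt (c s : ℕ → Prop) : Prop :=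
  ∀ m, s (m + 1) ↔ (s m ↔ ¬ c m)

namespace FlipsAt

variable {c s t : ℕ → Prop}

theorem not (hs : FlipsAt c s) : FlipsAt c fun m => ¬ s m :=
  fun m => by have := hs m; tauto

theorem iff (hs : FlipsAt c s) (ht : FlipsAt c t) (h₀ : s 0 ↔ t 0) (m : ℕ) : s m ↔ t m := by
  induction m with
  | zero => exact h₀
  | succ m ih => have := hs m; have := ht m; tauto

end FlipsAt

theorem flipsAt_even_card_filter_range (c : ℕ → Prop) [DecidablePred c] :
    FlipsAt c fun m => Even ((range m).filter c).card := by
  intro m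
  dsimp only
  rw [range_add_one, filter_insert]
  by_cases hm : c m
  · simp [hm, card_insert_of_notMem, Nat.even_add_one]
  · simp [hm]

section shiftWhere

variable {d : ℕ} {x : ℕ → ℕ} {s : ℕ → Prop} [DecidablePred s]

def shiftWhere (d : ℕ) (x : ℕ → ℕ) (s : ℕ → Prop) [DecidablePred s] (m : ℕ) : ℕ :=
  if s m then x m + d else x m

theorem shiftWhere_mod (hx : ∀ m, x m < d) (m : ℕ) : shiftWhere d x s m % d = x m := by
  unfold shiftWhere
  split_ifs
  · rw [Nat.add_mod_right, Nat.mod_eq_of_lt (hx m)]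
  · exact Nat.mod_eq_of_lt (hx m)

theorem le_shiftWhere_iff (hx : ∀ m, x m < d) (m : ℕ) : d ≤ shiftWhere d x s m ↔ s m := by
  unfold shiftWhere
  split_ifs with h
  · simp [h]
  · simpa [h] using hx m

theorem shiftWhere_lt (hx : ∀ m, x m < d) (m : ℕ) : shiftWhere d x s m < 2 * d := by
  unfold shiftWhere
  have := hx m
  split_ifs <;> omega

theorem shiftWhere_congr {t : ℕ → Prop} [DecidablePred t] (h : ∀ m, s m ↔ t m) :
    shiftWhere d x s = shiftWhere d x t :=
  funext fun m => if_congr (h m) rfl rfl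

theorem eq_of_shiftWhere_eq {x' : ℕ → ℕ} {t : ℕ → Prop} [DecidablePred t]
    (hx : ∀ m, x m < d) (hx' : ∀ m, x' m < d) (h : shiftWhere d x s = shiftWhere d x' t) :
    x = x' :=
  funext fun m => by rw [← shiftWhere_mod (s := s) hx m, h, shiftWhere_mod hx' m]

theorem shiftWhere_mod_le {y : ℕ → ℕ} (hy : ∀ m, y m < 2 * d) :
    shiftWhere d (y · % d) (fun m => d ≤ y m) = y := by
  funext m
  unfold shiftWhere
  have := hy m
  split_ifs with h <;> dsimp only
  · rw [Nat.mod_eq_sub_mod h, Nat.mod_eq_of_lt (by omega)]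
    omega
  · exact Nat.mod_eq_of_lt (by omega)

end shiftWhere

theorem tau_eq_shiftWhere (d L : ℕ) (x : ℕ → ℕ) :
    tau d L x = shiftWhere d x fun m => ¬ Even ((range m).filter (L ≤ x ·)).card :=
  funext fun m => by simp only [tau, shiftWhere, ite_not]

theorem omega'_eq_shiftWhere (d L : ℕ) (x : ℕ → ℕ) :
    omega' d L x = shiftWhere d x fun m => Even ((range m).filter (L ≤ x ·)).card :=
  rfl

theorem transRel_iff {d L i j : ℕ} (hLd : L ≤ d) (hi : i < 2 * d) :
    transRel d L i j ↔ (d ≤ j ↔ (d ≤ i ↔ ¬ L ≤ i % d)) := by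
  unfold transRel
  by_cases hid : d ≤ i
  · rw [Nat.mod_eq_sub_mod hid, Nat.mod_eq_of_lt (by omega)]
    split_ifs <;> simp only [hid, true_iff, not_le] <;> omega
  · rw [Nat.mod_eq_of_lt (by omega)]
    split_ifs <;> simp only [hid, false_iff, not_le, not_lt] <;> omega

theorem forall_transRel_iff_flipsAt {d L : ℕ} {y : ℕ → ℕ} (hLd : L ≤ d)
    (hy : ∀ m, y m < 2 * d) :
    (∀ m, transRel d L (y m) (y (m + 1))) ↔ FlipsAt (fun m => L ≤ y m % d) (d ≤ y ·) :=
  forall_congr' fun m => transRel_iff hLd (hy m)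

def sigmaA (d L : ℕ) : Set (ℕ → ℕ) :=
  {y | (∀ m, y m < 2 * d) ∧ ∀ m, transRel d L (y m) (y (m + 1))}

section codings

variable {d L : ℕ} {x : ℕ → ℕ}

theorem shiftWhere_mem_sigmaA {s : ℕ → Prop} [DecidablePred s] (hLd : L ≤ d)
    (hx : ∀ m, x m < d) (hs : FlipsAt (L ≤ x ·) s) : shiftWhere d x s ∈ sigmaA d L := by
  refine ⟨shiftWhere_lt hx, (forall_transRel_iff_flipsAt hLd (shiftWhere_lt hx)).2 ?_⟩
  simpa only [shiftWhere_mod hx, le_shiftWhere_iff hx] using hs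

theorem tau_mem_sigmaA (hLd : L ≤ d) (hx : ∀ m, x m < d) : tau d L x ∈ sigmaA d L := by
  rw [tau_eq_shiftWhere]
  exact shiftWhere_mem_sigmaA hLd hx (flipsAt_even_card_filter_range _).not

theorem omega'_mem_sigmaA (hLd : L ≤ d) (hx : ∀ m, x m < d) : omega' d L x ∈ sigmaA d L :=
  shiftWhere_mem_sigmaA hLd hx (flipsAt_even_card_filter_range _)

theorem tau_injOn : Set.InjOn (tau d L) {x | ∀ m, x m < d} := fun x hx x' hx' h => by
  rw [tau_eq_shiftWhere, tau_eq_shiftWhere] at h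
  exact eq_of_shiftWhere_eq hx hx' h

theorem omega'_injOn : Set.InjOn (omega' d L) {x | ∀ m, x m < d} :=
  fun _ hx _ hx' h => eq_of_shiftWhere_eq hx hx' h

theorem tau_ne_omega' {x' : ℕ → ℕ} (hx : ∀ m, x m < d) (hx' : ∀ m, x' m < d) :
    tau d L x ≠ omega' d L x' := fun h => by
  have h₀ := congrArg (d ≤ ·) (congrFun h 0)
  simp [tau_eq_shiftWhere, omega'_eq_shiftWhere, le_shiftWhere_iff hx,
    le_shiftWhere_iff hx'] at h₀

theorem exists_eq_tau_or_eq_omega'_of_mem_sigmaA {y : ℕ → ℕ} (hLd : L ≤ d)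
    (hy : y ∈ sigmaA d L) :
    ∃ x, (∀ m, x m < d) ∧ (tau d L x = y ∨ omega' d L x = y) := by
  obtain ⟨hy, hA⟩ := hy
  have hflips := (forall_transRel_iff_flipsAt hLd hy).1 hA
  have hd : 0 < d := by have := hy 0; omega
  refine ⟨(y · % d), fun m => Nat.mod_lt _ hd, ?_⟩
  rw [tau_eq_shiftWhere, omega'_eq_shiftWhere]
  by_cases h₀ : d ≤ y 0
  · refine Or.inr <| .trans (shiftWhere_congr ?_) (shiftWhere_mod_le hy)
    exact (flipsAt_even_card_filter_range _).iff hflips (by simpa using h₀)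
  · refine Or.inl <| .trans (shiftWhere_congr ?_) (shiftWhere_mod_le hy)
    exact (flipsAt_even_card_filter_range _).not.iff hflips (by simpa using h₀)

end codings

theorem stmt_18_general (d L : ℕ) (hLd : L < d) :
    Set.InjOn (tau d L) {x : ℕ → ℕ | ∀ m, x m < d} ∧
    Set.InjOn (omega' d L) {x : ℕ → ℕ | ∀ m, x m < d} ∧
    Disjoint (tau d L '' {x : ℕ → ℕ | ∀ m, x m < d})
      (omega' d L '' {x : ℕ → ℕ | ∀ m, x m < d}) ∧
    tau d L '' {x : ℕ → ℕ | ∀ m, x m < d} ∪ omega' d L '' {x : ℕ → ℕ | ∀ m, x m < d} =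
      {y : ℕ → ℕ | (∀ m, y m < 2 * d) ∧ ∀ m, transRel d L (y m) (y (m + 1))} := by
  refine ⟨tau_injOn, omega'_injOn, ?_, ?_⟩
  · refine Set.disjoint_left.2 ?_
    rintro _ ⟨x, hx, rfl⟩ ⟨x', hx', h⟩
    exact tau_ne_omega' hx hx' h.symm
  · refine Set.Subset.antisymm ?_ fun y hy => ?_
    · rintro _ (⟨x, hx, rfl⟩ | ⟨x, hx, rfl⟩)
      exacts [tau_mem_sigmaA hLd.le hx, omega'_mem_sigmaA hLd.le hx]
    · obtain ⟨x, hx, h | h⟩ := exists_eq_tau_or_eq_omega'_of_mem_sigmaA hLd.le hy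
      exacts [Or.inl ⟨x, hx, h⟩, Or.inr ⟨x, hx, h⟩]

theorem stmt_18 (d L : ℕ) (hL : 0 < L) (hLd : L < d) :
    Set.InjOn (tau d L) {x : ℕ → ℕ | ∀ m, x m < d} ∧
    Set.InjOn (omega' d L) {x : ℕ → ℕ | ∀ m, x m < d} ∧
    Disjoint (tau d L '' {x : ℕ → ℕ | ∀ m, x m < d})
      (omega' d L '' {x : ℕ → ℕ | ∀ m, x m < d}) ∧
    tau d L '' {x : ℕ → ℕ | ∀ m, x m < d} ∪ omega' d L '' {x : ℕ → ℕ | ∀ m, x m < d} =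
      {y : ℕ → ℕ | (∀ m, y m < 2 * d) ∧ ∀ m, transRel d L (y m) (y (m + 1))} :=
  stmt_18_general d L hLd
end
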